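/- arXiv:2309.16252 — 7 statements merged into one kernel-verified Lean document; each statement's English description precedes it below -/
import Mathlib

section
/- Let G be a finite group with a normal subgroup N. Assume that G has a generating set of size d. Let k ≥ d be an integer and let a_1, …, a_k ∈ G be elements such that the cosets a_1 N, …, a_k N generate the quotient group G/N. Then there exist elements b_1, …, b_k of G with b_i ∈ a_i N for each i, such that {b_1, …, b_k} generates G. -/
/-!
Gaschütz's counting argument. For a tuple `q` of elements of `G ⧸ N` and a subgroup `H`, let
`φ_q(H)` be the number of lifts of `q` to `G` that generate exactly `H`. If `H ⊔ N = ⊤`, the lifts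
with all entries in `H` are counted by `∑_{K ≤ H} φ_q(K)`, and also by `|H ∩ N| ^ k`, since every
coset of `N` meets `H` in a coset of `H ∩ N`. When `q` generates `G ⧸ N`, moreover `φ_q(H) = 0`
unless `H ⊔ N = ⊤`. Induction on `H` then shows that `φ_q(H)` is the same for all generating
tuples `q`. Padding a generating `d`-tuple of `G` with `1`s gives a generating `k`-tuple `c`, so
`φ_q(G) = φ_{c N}(G) > 0` for the given `q = a N`.
-/

open Subgroup QuotientGroup

theorem MonoidHom.card_fiber_eq_card_ker {A B : Type*} [Group A] [Group B] (f : A →* B) (a : A) :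
    Nat.card {x // f x = f a} = Nat.card f.ker :=
  Nat.card_congr <| (Equiv.mulLeft a⁻¹).subtypeEquiv fun x => by
    rw [Equiv.coe_mulLeft, MonoidHom.mem_ker, map_mul, map_inv, inv_mul_eq_one, eq_comm]

namespace Gaschutz

variable {G : Type*} [Group G] (N : Subgroup G) [N.Normal] {ι : Type*}

theorem map_mk_closure_range (b : ι → G) :
    (closure (Set.range b)).map (mk' N) = closure (Set.range fun i => (b i : G ⧸ N)) := by
  rw [MonoidHom.map_closure, ← Set.range_comp]
  rfl

theorem closure_range_mk_eq_top {b : ι → G} (hb : closure (Set.range b) = ⊤) :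
    closure (Set.range fun i => (b i : G ⧸ N)) = ⊤ := by
  rw [← map_mk_closure_range, hb, ← MonoidHom.range_eq_map, range_mk']

theorem closure_range_sup_eq_top {q : ι → G ⧸ N} (hq : closure (Set.range q) = ⊤) {b : ι → G}
    (hb : ∀ i, (b i : G ⧸ N) = q i) : closure (Set.range b) ⊔ N = ⊤ := by
  have hmap := map_mk_closure_range N b
  rw [show (fun i => (b i : G ⧸ N)) = q from funext hb, hq] at hmap
  rw [sup_comm, ← comap_map_mk', hmap, comap_top]

theorem exists_mem_mk_eq {H : Subgroup G} (hH : H ⊔ N = ⊤) (x : G ⧸ N) :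
    ∃ h ∈ H, (h : G ⧸ N) = x := by
  obtain ⟨y, rfl⟩ := mk_surjective x
  obtain ⟨h, hh, n, hn, rfl⟩ := mem_sup_of_normal_right.1 (hH ▸ mem_top y)
  exact ⟨h, hh, by simpa⟩

theorem card_mem_mk_eq {H : Subgroup G} (hH : H ⊔ N = ⊤) (x : G ⧸ N) :
    Nat.card {y : G // y ∈ H ∧ (y : G ⧸ N) = x} = Nat.card (N.subgroupOf H) := by
  obtain ⟨h, hh, rfl⟩ := exists_mem_mk_eq N hH x
  rw [← Nat.card_congr (Equiv.subtypeSubtypeEquivSubtypeInter (· ∈ H) _)]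
  have hker : ((mk' N).comp H.subtype).ker = N.subgroupOf H := by
    rw [← MonoidHom.comap_ker, ker_mk']
    rfl
  exact hker ▸ ((mk' N).comp H.subtype).card_fiber_eq_card_ker ⟨h, hh⟩

theorem card_lifts_mem [Fintype ι] {H : Subgroup G} (hH : H ⊔ N = ⊤) (q : ι → G ⧸ N) :
    Nat.card {b : ι → G // ∀ i, b i ∈ H ∧ (b i : G ⧸ N) = q i} =
      Nat.card (N.subgroupOf H) ^ Fintype.card ι := by
  rw [Nat.card_congr (Equiv.subtypePiEquivPi (p := fun i y => y ∈ H ∧ (y : G ⧸ N) = q i)),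
    Nat.card_pi]
  simp only [card_mem_mk_eq N hH, Finset.prod_const, Finset.card_univ]

noncomputable def liftCount (q : ι → G ⧸ N) (H : Subgroup G) : ℕ :=
  Nat.card {b : ι → G // (∀ i, (b i : G ⧸ N) = q i) ∧ closure (Set.range b) = H}

theorem liftCount_eq_zero {q : ι → G ⧸ N} (hq : closure (Set.range q) = ⊤) {H : Subgroup G}
    (hH : H ⊔ N ≠ ⊤) : liftCount N q H = 0 :=
  Nat.card_eq_zero.2 <| .inl ⟨fun ⟨_, hb, hbH⟩ => hH (hbH ▸ closure_range_sup_eq_top N hq hb)⟩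

open scoped Classical in
theorem sum_liftCount_le [Finite G] [Fintype ι] [Fintype (Subgroup G)] {H : Subgroup G}
    (hH : H ⊔ N = ⊤) (q : ι → G ⧸ N) :
    ∑ K ∈ Finset.univ.filter (· ≤ H), liftCount N q K =
      Nat.card (N.subgroupOf H) ^ Fintype.card ι := by
  have := Fintype.ofFinite G
  have closure_le_iff (b : ι → G) : closure (Set.range b) ≤ H ↔ ∀ i, b i ∈ H := by
    rw [closure_le, Set.range_subset_iff]
    rfl
  rw [← card_lifts_mem N hH q]
  simp only [liftCount, Nat.card_eq_fintype_card, Fintype.card_subtype]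
  rw [Finset.card_eq_sum_card_fiberwise (f := fun b => Subgroup.closure (Set.range b))]
  · refine Finset.sum_congr rfl fun K hK => ?_
    rw [Finset.filter_filter]
    refine congrArg Finset.card (Finset.filter_congr fun b _ => ?_)
    constructor
    · rintro ⟨hb, rfl⟩
      exact ⟨fun i => ⟨(closure_le_iff b).1 (Finset.mem_filter.1 hK).2 i, hb i⟩, rfl⟩
    · rintro ⟨hb, rfl⟩
      exact ⟨fun i => (hb i).2, rfl⟩
  · intro b hb
    simp only [Finset.coe_filter, Finset.mem_univ, true_and, Set.mem_ofPred_eq] at hb ⊢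
    exact (closure_le_iff b).2 fun i => (hb i).1

theorem liftCount_eq_of_closure_eq_top [Finite G] [Finite ι] {q q' : ι → G ⧸ N}
    (hq : closure (Set.range q) = ⊤) (hq' : closure (Set.range q') = ⊤) (H : Subgroup G) :
    liftCount N q H = liftCount N q' H := by
  classical
  have := Fintype.ofFinite ι
  have := Fintype.ofFinite (Subgroup G)
  induction H using WellFoundedLT.induction with
  | _ H ih =>
  by_cases hH : H ⊔ N = ⊤
  · have hsum := (sum_liftCount_le N hH q).trans (sum_liftCount_le N hH q').symm
    have hH_mem : H ∈ Finset.univ.filter (· ≤ H) := by simp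
    rw [← Finset.add_sum_erase _ _ hH_mem, ← Finset.add_sum_erase _ _ hH_mem,
      Finset.sum_congr rfl fun K hK => ih K ?_] at hsum
    · exact Nat.add_right_cancel hsum
    · obtain ⟨hKH, hK⟩ := Finset.mem_erase.1 hK
      exact lt_of_le_of_ne (Finset.mem_filter.1 hK).2 hKH
  · rw [liftCount_eq_zero N hq hH, liftCount_eq_zero N hq' hH]

end Gaschutz

theorem gaschutz_lemma (G : Type*) [Group G] [Finite G] (N : Subgroup G) [N.Normal]
    (d : ℕ) (g : Fin d → G) (hg : Subgroup.closure (Set.range g) = ⊤)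
    (k : ℕ) (hk : d ≤ k) (a : Fin k → G)
    (ha : Subgroup.closure (Set.range fun i => (QuotientGroup.mk (a i) : G ⧸ N)) = ⊤) :
    ∃ b : Fin k → G,
      (∀ i, (QuotientGroup.mk (b i) : G ⧸ N) = QuotientGroup.mk (a i)) ∧
      Subgroup.closure (Set.range b) = ⊤ := by
  set c : Fin k → G := Function.extend (Fin.castLE hk) g 1
  have hc : closure (Set.range c) = ⊤ := by
    refine top_unique (hg ▸ closure_mono ?_)
    rintro _ ⟨j, rfl⟩
    exact ⟨Fin.castLE hk j, (Fin.castLE_injective hk).extend_apply g 1 j⟩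
  have hc_lift : Gaschutz.liftCount N (fun i => (c i : G ⧸ N)) ⊤ ≠ 0 :=
    Nat.card_ne_zero.2 ⟨⟨c, fun _ => rfl, hc⟩, inferInstance⟩
  rw [Gaschutz.liftCount_eq_of_closure_eq_top N (Gaschutz.closure_range_mk_eq_top N hc) ha] at hc_lift
  obtain ⟨⟨b, hb⟩, -⟩ := Nat.card_ne_zero.1 hc_lift
  exact ⟨b, hb⟩
end

section
/- Let G be a perfect group (i.e. G = [G,G]) and let M be a module over the group ring ℤG. Then the submodule V := M(G−1) is a perfect ℤG-module, i.e. V = V(G−1); that is, V equals the ℤG-submodule generated by the set {g•v − v : g ∈ G, v ∈ V}. -/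
theorem augmentation_submodule_perfect_of_perfect_group
    (G : Type*) [Group G] (hG : commutator G = ⊤)
    (M : Type*) [AddCommGroup M] [Module (MonoidAlgebra ℤ G) M] :
    Submodule.span (MonoidAlgebra ℤ G)
        {x : M | ∃ (h : G) (m : M), x = MonoidAlgebra.of ℤ G h • m - m}
      = Submodule.span (MonoidAlgebra ℤ G)
        {x : M | ∃ (h : G) (v : M),
          v ∈ Submodule.span (MonoidAlgebra ℤ G)
            {y : M | ∃ (h' : G) (m : M), y = MonoidAlgebra.of ℤ G h' • m - m} ∧
          x = MonoidAlgebra.of ℤ G h • v - v} := by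
  set R := MonoidAlgebra ℤ G
  set S : Set M := {x : M | ∃ (h : G) (m : M), x = MonoidAlgebra.of ℤ G h • m - m} with hS
  set V := Submodule.span R S with hV
  set W := Submodule.span R
      {x : M | ∃ (h : G) (v : M), v ∈ V ∧ x = MonoidAlgebra.of ℤ G h • v - v} with hW
  apply le_antisymm
  · -- V ≤ W
    rw [Submodule.span_le]
    rintro x ⟨g, m, rfl⟩
    -- define hom G →* Multiplicative (M ⧸ W)
    let f : G →* Multiplicative (M ⧸ W) :=
      { toFun := fun g => Multiplicative.ofAdd
          (Submodule.Quotient.mk (MonoidAlgebra.of ℤ G g • m - m))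
        map_one' := by
          show Multiplicative.ofAdd
            (Submodule.Quotient.mk (MonoidAlgebra.of ℤ G 1 • m - m)) = 1
          rw [map_one, one_smul, sub_self, Submodule.Quotient.mk_zero]
          rfl
        map_mul' := by
          intro a b
          show Multiplicative.ofAdd
              (Submodule.Quotient.mk (MonoidAlgebra.of ℤ G (a * b) • m - m)) =
            Multiplicative.ofAdd (Submodule.Quotient.mk (MonoidAlgebra.of ℤ G a • m - m)) *
            Multiplicative.ofAdd (Submodule.Quotient.mk (MonoidAlgebra.of ℤ G b • m - m))
          rw [← ofAdd_add]
          congr 1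
          rw [← Submodule.Quotient.mk_add, Submodule.Quotient.eq]
          have key : MonoidAlgebra.of ℤ G (a * b) • m - m -
              (MonoidAlgebra.of ℤ G a • m - m + (MonoidAlgebra.of ℤ G b • m - m)) =
              MonoidAlgebra.of ℤ G a • (MonoidAlgebra.of ℤ G b • m - m) -
                (MonoidAlgebra.of ℤ G b • m - m) := by
            rw [map_mul, mul_smul, smul_sub]
            abel
          rw [key]
          exact Submodule.subset_span
            ⟨a, MonoidAlgebra.of ℤ G b • m - m, Submodule.subset_span ⟨b, m, rfl⟩, rfl⟩ }
    have hker : g ∈ f.ker := by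
      apply Abelianization.commutator_subset_ker f
      rw [hG]; trivial
    have : Submodule.Quotient.mk (p := W) (MonoidAlgebra.of ℤ G g • m - m) = 0 := hker
    rwa [Submodule.Quotient.mk_eq_zero] at this
  · -- W ≤ V
    rw [Submodule.span_le]
    rintro x ⟨g, v, hv, rfl⟩
    exact Submodule.subset_span ⟨g, v, rfl⟩
end

section
/- Let Γ be a perfect group generated by m elements g_1, …, g_m, and let F be the free group on generators x_1, …, x_m. Then there exist words w_1, …, w_m belonging to the commutator subgroup [F,F] such that, setting L := F / ⟪x_1⁻¹w_1, …, x_m⁻¹w_m⟫ (the quotient of F by the normal closure of the elements x_i⁻¹ w_i), the group L is perfect and there is a surjective group homomorphism from L onto Γ sending the image of x_i in L to g_i for each i. -/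
theorem perfect_fg_group_is_image_of_deficiency_zero_perfect_group
    (Γ : Type*) [Group Γ] (hΓ : commutator Γ = ⊤)
    (m : ℕ) (g : Fin m → Γ) (hg : Subgroup.closure (Set.range g) = ⊤) :
    ∃ w : Fin m → FreeGroup (Fin m),
      (∀ i, w i ∈ commutator (FreeGroup (Fin m))) ∧
      commutator (FreeGroup (Fin m) ⧸
        Subgroup.normalClosure (Set.range fun i => (FreeGroup.of i)⁻¹ * w i)) = ⊤ ∧
      ∃ f : (FreeGroup (Fin m) ⧸
          Subgroup.normalClosure (Set.range fun i => (FreeGroup.of i)⁻¹ * w i)) →* Γ,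
        Function.Surjective f ∧
        ∀ i, f (QuotientGroup.mk (FreeGroup.of i)) = g i := by
  classical
  set F := FreeGroup (Fin m)
  let π : F →* Γ := FreeGroup.lift g
  have hπsurj : Function.Surjective π := by
    rw [← MonoidHom.range_eq_top, FreeGroup.range_lift_eq_closure, hg]
  -- the commutator subgroup of F maps onto commutator Γ = ⊤
  have hmap : Subgroup.map π (commutator F) = ⊤ := by
    rw [commutator_def, Subgroup.map_commutator, Subgroup.map_top_of_surjective _ hπsurj,
      ← commutator_def, hΓ]
  have hex : ∀ i, ∃ v ∈ commutator F, π v = g i := by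
    intro i
    have : g i ∈ Subgroup.map π (commutator F) := by rw [hmap]; trivial
    simpa [Subgroup.mem_map] using this
  choose w hw hπw using hex
  refine ⟨w, hw, ?_, ?_⟩
  · -- perfectness of the quotient
    set N := Subgroup.normalClosure (Set.range fun i => (FreeGroup.of i)⁻¹ * w i)
    set q : F →* F ⧸ N := QuotientGroup.mk' N
    have hqsurj : Function.Surjective q := QuotientGroup.mk'_surjective N
    have hgen : ∀ i : Fin m, q (FreeGroup.of i) ∈ commutator (F ⧸ N) := by
      intro i
      have hmem : (FreeGroup.of i)⁻¹ * w i ∈ N :=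
        Subgroup.subset_normalClosure ⟨i, rfl⟩
      have : q (FreeGroup.of i) = q (w i) := by
        have := (QuotientGroup.eq (s := N)).2 hmem
        simpa [q, QuotientGroup.mk'_apply] using this
      rw [this]
      have : commutator (F ⧸ N) = Subgroup.map q (commutator F) := by
        rw [commutator_def, commutator_def, Subgroup.map_commutator,
          Subgroup.map_top_of_surjective _ hqsurj]
      rw [this]
      exact ⟨w i, hw i, rfl⟩
    rw [eq_top_iff, ← Subgroup.map_top_of_surjective q hqsurj,
      ← FreeGroup.closure_range_of (Fin m), MonoidHom.map_closure]
    refine (Subgroup.closure_le _).2 ?_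
    rintro x ⟨_, ⟨i, rfl⟩, rfl⟩
    exact hgen i
  · -- the induced homomorphism
    set N := Subgroup.normalClosure (Set.range fun i => (FreeGroup.of i)⁻¹ * w i)
    have hNle : N ≤ π.ker := by
      apply Subgroup.normalClosure_le_normal
      rintro x ⟨i, rfl⟩
      simp [MonoidHom.mem_ker, π, hπw i]
    refine ⟨QuotientGroup.lift N π hNle, ?_, ?_⟩
    · intro γ
      obtain ⟨x, hx⟩ := hπsurj γ
      exact ⟨QuotientGroup.mk x, hx⟩
    · intro i
      simp [π]
end

section
/- Let F be the free group on generators x_1, …, x_m and let w ∈ [F,F] be an element of its commutator subgroup. Let G be a group, A an abelian normal subgroup of G, and B = [A,G] the subgroup generated by all commutators [a,g] with a ∈ A, g ∈ G. Then for all elements a_1, …, a_m ∈ G and c_1, …, c_m ∈ A, the elements w(a_1 c_1, …, a_m c_m) and w(a_1, …, a_m) are congruent modulo B, i.e. w(a_1 c_1, …, a_m c_m) · w(a_1, …, a_m)⁻¹ ∈ B. Here w(g_1, …, g_m) denotes the image of w under the homomorphism F → G sending x_i to g_i. -/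
/-!
Modulo `B = ⁅A, G⁆` every element of `A` is central, so in `G ⧸ B` the substitution
`xᵢ ↦ aᵢ cᵢ` multiplies the value of any word `w` by `w(c₁, …, cₘ)`. The images of the `cᵢ`
commute, so `w(c₁, …, cₘ) = 1` for `w ∈ [F, F]`.
-/

open scoped commutatorElement

theorem conj_commutatorElement_eq_inv_mul {G : Type*} [Group G] (g h k : G) :
    k * ⁅g, h⁆ * k⁻¹ = ⁅g, k⁆⁻¹ * ⁅g, k * h⁆ := by
  simp only [commutatorElement_def]
  group

namespace Subgroup

variable {G : Type*} [Group G]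

/-- Unlike `Subgroup.commutator_normal`, no normality of `H` is needed: by
`conj_commutatorElement_eq_inv_mul`, a conjugate of a generator `⁅h, g⁆` is a product of two
generators. -/
instance commutator_top_right_normal (H : Subgroup G) : ⁅H, (⊤ : Subgroup G)⁆.Normal := by
  suffices h : ⁅H, ⊤⁆ = normalClosure { g | ∃ g₁ ∈ H, ∃ g₂ ∈ (⊤ : Subgroup G), ⁅g₁, g₂⁆ = g } by
    rw [h]; infer_instance
  refine le_antisymm closure_le_normalClosure (closure_le _ |>.mpr fun x hx => ?_)
  obtain ⟨_, ⟨g, hg, h, -, rfl⟩, k, rfl⟩ :=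
    (Group.mem_conjugatesOfSet_iff.mp hx).imp fun _ => And.imp_right isConj_iff.mp
  rw [conj_commutatorElement_eq_inv_mul]
  exact mul_mem (inv_mem (commutator_mem_commutator hg (mem_top k)))
    (commutator_mem_commutator hg (mem_top _))

theorem map_mk'_le_center_of_commutator_top_le {H N : Subgroup G} [N.Normal]
    (hHN : ⁅H, (⊤ : Subgroup G)⁆ ≤ N) : H.map (QuotientGroup.mk' N) ≤ center (G ⧸ N) := by
  rw [← commutator_top_right_eq_bot_iff_le_center, eq_bot_iff,
    ← map_top_of_surjective _ (QuotientGroup.mk'_surjective N), ← map_commutator,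
    ← QuotientGroup.map_mk'_self N]
  exact map_mono hHN

end Subgroup

namespace FreeGroup

variable {α G : Type*} [Group G]

theorem lift_mul_of_mem_center (a z : α → G) (hz : ∀ i, z i ∈ Subgroup.center G)
    (w : FreeGroup α) : lift (fun i => a i * z i) w = lift a w * lift z w := by
  have hcentral : ∀ v, lift z v ∈ Subgroup.center G := fun v =>
    range_lift_le (Set.range_subset_iff.mpr hz) ⟨v, rfl⟩
  induction w using FreeGroup.induction_on with
  | C1 => simp
  | of i => simp
  | inv_of i ih =>
    rw [_root_.map_inv, _root_.map_inv, _root_.map_inv, ih, mul_inv_rev]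
    exact (Subgroup.mem_center_iff.mp (inv_mem (hcentral (of i))) _).symm
  | mul u v hu hv =>
    have hzu := Subgroup.mem_center_iff.mp (hcentral u)
    rw [_root_.map_mul, _root_.map_mul, _root_.map_mul, hu, hv, mul_assoc,
      ← mul_assoc (lift z u), ← hzu, mul_assoc, mul_assoc]

theorem lift_eq_one_of_mem_commutator (z : α → G) (hz : ∀ i, z i ∈ Subgroup.center G)
    {w : FreeGroup α} (hw : w ∈ commutator (FreeGroup α)) : lift z w = 1 := by
  have hmem : lift z w ∈ ⁅(lift z).range, (lift z).range⁆ := by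
    simpa only [commutator_def, Subgroup.map_commutator, ← MonoidHom.range_eq_map]
      using Subgroup.mem_map_of_mem (lift z) hw
  have hle : ⁅(lift z).range, (lift z).range⁆ ≤ ⁅Subgroup.center G, ⊤⁆ :=
    Subgroup.commutator_mono (range_lift_le (Set.range_subset_iff.mpr hz)) le_top
  simpa only [Subgroup.commutator_center_left, Subgroup.mem_bot] using hle hmem

theorem lift_mul_eq_of_mem_commutator (a z : α → G) (hz : ∀ i, z i ∈ Subgroup.center G)
    {w : FreeGroup α} (hw : w ∈ commutator (FreeGroup α)) :
    lift (fun i => a i * z i) w = lift a w := by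
  rw [lift_mul_of_mem_center a z hz, lift_eq_one_of_mem_commutator z hz hw, mul_one]

theorem map_lift_apply {H : Type*} [Group H] (φ : G →* H) (f : α → G) (w : FreeGroup α) :
    φ (lift f w) = lift (φ ∘ f) w :=
  lift_unique (φ.comp (lift f)) (by simp)

end FreeGroup

theorem commutator_word_congruent_mod_commutator_of_abelian_normal_general
    (m : ℕ) (w : FreeGroup (Fin m)) (hw : w ∈ commutator (FreeGroup (Fin m)))
    (G : Type*) [Group G] (A : Subgroup G)
    (a : Fin m → G) (c : Fin m → G) (hc : ∀ i, c i ∈ A) :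
    FreeGroup.lift (fun i => a i * c i) w * (FreeGroup.lift a w)⁻¹
      ∈ ⁅A, (⊤ : Subgroup G)⁆ := by
  let π := QuotientGroup.mk' ⁅A, (⊤ : Subgroup G)⁆
  have hcentral : ∀ i, π (c i) ∈ Subgroup.center (G ⧸ ⁅A, (⊤ : Subgroup G)⁆) := fun i =>
    Subgroup.map_mk'_le_center_of_commutator_top_le le_rfl (Subgroup.mem_map_of_mem π (hc i))
  rw [← div_eq_mul_inv, ← QuotientGroup.eq_iff_div_mem, ← QuotientGroup.mk'_apply,
    ← QuotientGroup.mk'_apply, FreeGroup.map_lift_apply, FreeGroup.map_lift_apply]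
  exact FreeGroup.lift_mul_eq_of_mem_commutator (π ∘ a) (π ∘ c) hcentral hw

theorem commutator_word_congruent_mod_commutator_of_abelian_normal
    (m : ℕ) (w : FreeGroup (Fin m)) (hw : w ∈ commutator (FreeGroup (Fin m)))
    (G : Type*) [Group G] (A : Subgroup G) [A.Normal]
    (hA : ∀ x ∈ A, ∀ y ∈ A, x * y = y * x)
    (a : Fin m → G) (c : Fin m → G) (hc : ∀ i, c i ∈ A) :
    FreeGroup.lift (fun i => a i * c i) w * (FreeGroup.lift a w)⁻¹
      ∈ ⁅A, (⊤ : Subgroup G)⁆ :=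
  commutator_word_congruent_mod_commutator_of_abelian_normal_general m w hw G A a c hc
end

section
/- Let M be a finite non-abelian simple group generated by elements g_1, …, g_n (n ≥ 1). Then there exists an index j ∈ {1, …, n} such that the centralizer of g_j in M satisfies |C_M(g_j)| ≤ |M|^{(n−1)/n}, and consequently the conjugacy class of g_j in M has size at least |M|^{1/n}. -/
/-!
The centralizers of the generators intersect in the centre, which is trivial, so
`|M| ≤ ∏ [M : C_M(g_i)]`. Hence some generator has `[M : C_M(g_j)]^n ≥ |M|`, and this index is
the size of its conjugacy class.
-/

open Subgroup

theorem Subgroup.center_eq_bot_of_isSimpleGroup {G : Type*} [Group G] [IsSimpleGroup G]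
    (hG : ∃ x y : G, x * y ≠ y * x) : center G = ⊥ := by
  refine (Normal.eq_bot_or_eq_top (H := center G) inferInstance).resolve_right fun htop => ?_
  obtain ⟨x, y, hxy⟩ := hG
  exact hxy (mem_center_iff.mp (htop ▸ mem_top x) y).symm

theorem Subgroup.card_le_prod_index_centralizer {G ι : Type*} [Group G] [Fintype ι]
    (g : ι → G) (hg : closure (Set.range g) = ⊤) (hZ : center G = ⊥) :
    Nat.card G ≤ ∏ i, (centralizer {g i}).index := by
  have hinf : ⨅ i, centralizer {g i} = ⊥ := by
    rw [← hZ, center_eq_iInf hg, iInf_range]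
  simpa [hinf] using index_iInf_le fun i => centralizer {g i}

theorem Finset.exists_le_pow_card_of_le_prod {ι N : Type*} [Fintype ι] [Nonempty ι]
    [CommMonoid N] [LinearOrder N] [MulLeftMono N] {a : N} (f : ι → N)
    (h : a ≤ ∏ i, f i) : ∃ i, a ≤ f i ^ Fintype.card ι := by
  obtain ⟨i, -, hi⟩ := Finset.exists_max_image Finset.univ f Finset.univ_nonempty
  exact ⟨i, h.trans (Finset.prod_le_pow_card _ _ _ fun j _ => hi j (Finset.mem_univ j))⟩

theorem Nat.card_setOf_isConj_eq_index_centralizer {G : Type*} [Group G] (g : G) :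
    Nat.card {x : G | IsConj g x} = (centralizer {g}).index := by
  have horbit : {x : G | IsConj g x} = MulAction.orbit (ConjAct G) g := by
    ext x
    exact isConj_comm.trans ConjAct.mem_orbit_conjAct.symm
  rw [horbit, centralizer_eq_comap_stabilizer, Nat.card_coe_set_eq, ← MulAction.index_stabilizer]
  exact (index_comap_of_surjective _ ConjAct.toConjAct.surjective).symm

theorem Real.rpow_one_div_le_of_le_pow {a b : ℝ} {n : ℕ} (ha : 0 ≤ a) (hb : 0 ≤ b) (hn : n ≠ 0)
    (h : a ≤ b ^ n) : a ^ ((1 : ℝ) / n) ≤ b := by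
  rw [one_div, rpow_inv_le_iff_of_pos ha hb (by positivity), rpow_natCast]
  exact h

theorem Real.div_le_rpow_sub_one_div {a b : ℝ} {n : ℕ} (ha : 0 < a) (hn : n ≠ 0)
    (h : a ^ ((1 : ℝ) / n) ≤ b) : a / b ≤ a ^ (((n : ℝ) - 1) / n) := by
  have hsplit : a ^ (((n : ℝ) - 1) / n) = a / a ^ ((1 : ℝ) / n) := by
    rw [sub_div, div_self (by positivity), rpow_sub ha, rpow_one]
  rw [hsplit]
  exact div_le_div_of_nonneg_left ha.le (by positivity) h

theorem exists_generator_with_small_centralizer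
    (M : Type*) [Group M] [Finite M]
    (hs : IsSimpleGroup M) (hna : ∃ x y : M, x * y ≠ y * x)
    (n : ℕ) (hn : 1 ≤ n) (g : Fin n → M)
    (hg : Subgroup.closure (Set.range g) = ⊤) :
    ∃ j : Fin n,
      (Nat.card (Subgroup.centralizer {g j}) : ℝ)
          ≤ (Nat.card M : ℝ) ^ (((n : ℝ) - 1) / n) ∧
      (Nat.card M : ℝ) ^ ((1 : ℝ) / n)
          ≤ (Nat.card {x : M | IsConj (g j) x} : ℝ) := by
  have : Nonempty (Fin n) := Fin.pos_iff_nonempty.mp hn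
  have hZ := center_eq_bot_of_isSimpleGroup hna
  obtain ⟨j, hj⟩ := Finset.exists_le_pow_card_of_le_prod _
    (card_le_prod_index_centralizer g hg hZ)
  rw [Fintype.card_fin] at hj
  have hn0 : n ≠ 0 := by omega
  have hroot : (Nat.card M : ℝ) ^ ((1 : ℝ) / n) ≤ (centralizer {g j}).index :=
    Real.rpow_one_div_le_of_le_pow (by positivity) (by positivity) hn0 (by exact_mod_cast hj)
  refine ⟨j, ?_, by rwa [Nat.card_setOf_isConj_eq_index_centralizer]⟩
  have hcard : (Nat.card (centralizer {g j}) : ℝ) = Nat.card M / (centralizer {g j}).index := by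
    rw [eq_div_iff (by exact_mod_cast (centralizer {g j}).index_ne_zero_of_finite)]
    exact_mod_cast card_mul_index (centralizer {g j})
  rw [hcard]
  exact Real.div_le_rpow_sub_one_div (by exact_mod_cast Nat.card_pos) hn0 hroot
end

section
/- Let d ≥ 2 be an integer and let Γ be a finitely generated perfect abstract group such that every finite perfect group generated by d elements is a homomorphic image of Γ. Let G be a profinite group (a compact, Hausdorff, totally disconnected topological group) that is topologically generated by d elements and satisfies that the closure of [G,G] equals G. Then G contains a dense subgroup H which is finitely generated as an abstract group and perfect, i.e. H = [H,H]. -/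
/-!
For an open normal subgroup `N` of `G`, the finite quotient `G ⧸ N` is perfect and generated by
the images of the `g i`, so it is a quotient of `Γ`. The maps `Γ → G` inducing a surjective
homomorphism `Γ →* G ⧸ N` then form a nonempty closed subset of the compact space `Γ → G`, and
these subsets decrease as `N` shrinks. A map in all of them is a homomorphism, because the open
normal subgroups of a profinite group intersect trivially, and its image is dense; this image is
finitely generated and perfect because `Γ` is.
-/

open Function Set Pointwise

section GeneratingHoms

variable {Γ : Type*} [Group Γ]

/-- When `S` generates `Γ`, these are the surjective homomorphisms `Γ →* Q`; phrased through `S`,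
the set is closed in `Γ → Q` for finite `S` and discrete `Q`. -/
def generatingHomSet (S : Set Γ) (Q : Type*) [Group Q] : Set (Γ → Q) :=
  {φ | (∀ a b, φ (a * b) = φ a * φ b) ∧ Subgroup.closure (φ '' S) = ⊤}

variable {S : Set Γ} {Q R : Type*} [Group Q] [Group R]

lemma comp_mem_generatingHomSet {φ : Γ → Q} (hφ : φ ∈ generatingHomSet S Q) (q : Q →* R)
    (hq : Surjective q) : q ∘ φ ∈ generatingHomSet S R := by
  refine ⟨fun a b => by simp [hφ.1], ?_⟩
  rw [image_comp, ← MonoidHom.map_closure, hφ.2, Subgroup.map_top_of_surjective q hq]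

lemma coe_mem_generatingHomSet (hS : Subgroup.closure S = ⊤) (φ : Γ →* Q) (hφ : Surjective φ) :
    ⇑φ ∈ generatingHomSet S Q :=
  comp_mem_generatingHomSet (φ := id) ⟨fun _ _ => rfl, by rwa [image_id]⟩ φ hφ

lemma isClosed_generatingHomSet [TopologicalSpace Q] [DiscreteTopology Q] (hS : S.Finite) :
    IsClosed (generatingHomSet S Q) := by
  have hgen : IsClosed {φ : Γ → Q | Subgroup.closure (φ '' S) = ⊤} := by
    have := hS.to_subtype
    have hpre : {φ : Γ → Q | Subgroup.closure (φ '' S) = ⊤} =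
        (fun φ (s : S) => φ s) ⁻¹' {ψ | Subgroup.closure (range ψ) = ⊤} := by
      ext φ; simp [image_eq_range]
    rw [hpre]
    exact (isClosed_discrete _).preimage (continuous_pi fun s => continuous_apply _)
  exact (isClosed_setOfPred_map_mul Γ Q).inter hgen

end GeneratingHoms

section Profinite

variable {G : Type*} [Group G] [TopologicalSpace G] [IsTopologicalGroup G]

lemma Subgroup.map_mk'_eq_top_of_dense (N : Subgroup G) [N.Normal] (hN : IsOpen (N : Set G))
    {K : Subgroup G} (hK : Dense (K : Set G)) : K.map (QuotientGroup.mk' N) = ⊤ := by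
  have := QuotientGroup.discreteTopology hN
  refine eq_top_iff.mpr fun q _ => ?_
  obtain ⟨x, rfl⟩ := QuotientGroup.mk_surjective q
  obtain ⟨k, hk, hkx⟩ := hK.exists_mem_open
    ((isOpen_discrete {(x : G ⧸ N)}).preimage QuotientGroup.continuous_mk) ⟨x, rfl⟩
  exact ⟨k, hk, hkx⟩

lemma commutator_quotient_eq_top_of_dense (hG : Dense (commutator G : Set G))
    (N : Subgroup G) [N.Normal] (hN : IsOpen (N : Set G)) : commutator (G ⧸ N) = ⊤ := by
  have h := map_commutator_eq G (QuotientGroup.mk' N)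
  rw [QuotientGroup.range_mk', ← commutator_def, Subgroup.map_mk'_eq_top_of_dense N hN hG]
    at h
  exact h.symm

variable [CompactSpace G] [TotallyDisconnectedSpace G]

lemma eq_one_of_forall_mem_openNormalSubgroup {x : G} (hx : ∀ N : OpenNormalSubgroup G, x ∈ N) :
    x = 1 := by
  by_contra hne
  obtain ⟨N, hN⟩ := ProfiniteGrp.exist_openNormalSubgroup_sub_open_nhds_of_one
    isOpen_compl_singleton (Ne.symm hne)
  exact hN (hx N) rfl

lemma Subgroup.dense_of_forall_map_mk'_eq_top {K : Subgroup G}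
    (hK : ∀ N : OpenNormalSubgroup G, K.map (QuotientGroup.mk' (N : Subgroup G)) = ⊤) :
    Dense (K : Set G) := by
  refine dense_iff_inter_open.mpr fun U hU ⟨u, hu⟩ => ?_
  obtain ⟨N, hN⟩ := ProfiniteGrp.exist_openNormalSubgroup_sub_open_nhds_of_one
    (hU.leftCoset u⁻¹) ⟨u, hu, inv_mul_cancel u⟩
  obtain ⟨k, hk, hku⟩ := (hK N).ge (mem_top (QuotientGroup.mk' (N : Subgroup G) u))
  have hkU : u⁻¹ * k ∈ u⁻¹ • U := hN (QuotientGroup.eq.mp hku.symm)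
  rw [mem_leftCoset_iff, inv_inv, mul_inv_cancel_left] at hkU
  exact ⟨k, hkU, hk⟩

theorem exists_monoidHom_denseRange_of_surjective_quotients {Γ : Type*} [Group Γ] [Group.FG Γ]
    (h : ∀ N : OpenNormalSubgroup G, ∃ φ : Γ →* G ⧸ (N : Subgroup G), Surjective φ) :
    ∃ F : Γ →* G, DenseRange F := by
  obtain ⟨S, hS, hSfin⟩ := Group.fg_iff.mp ‹Group.FG Γ›
  let C : OpenNormalSubgroup G → Set (Γ → G) := fun N =>
    (fun f => ((↑) : G → G ⧸ (N : Subgroup G)) ∘ f) ⁻¹' generatingHomSet S _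
  have hclosed (N) : IsClosed (C N) := (isClosed_generatingHomSet hSfin).preimage
    (continuous_pi fun γ => QuotientGroup.continuous_mk.comp (continuous_apply γ))
  have hne (N) : (C N).Nonempty := by
    obtain ⟨φ, hφ⟩ := h N
    choose f hf using fun γ => QuotientGroup.mk_surjective (φ γ)
    refine ⟨f, ?_⟩
    simpa only [C, mem_preimage, comp_def, hf] using coe_mem_generatingHomSet hS φ hφ
  have hmono : Monotone C := fun N M hNM f hf =>
    comp_mem_generatingHomSet hf (QuotientGroup.map _ _ (MonoidHom.id G) hNM)
      (QuotientGroup.map_surjective_of_surjective _ _ _ QuotientGroup.mk_surjective _)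
  have : Nonempty (OpenNormalSubgroup G) := ⟨⟨⊤, Subgroup.normal_top⟩⟩
  obtain ⟨f, hf⟩ := IsCompact.nonempty_iInter_of_directed_nonempty_isCompact_isClosed C
    hmono.directed_ge hne (fun N => (hclosed N).isCompact) hclosed
  rw [mem_iInter] at hf
  have hmul (a b : Γ) : f (a * b) = f a * f b := by
    refine inv_mul_eq_one.mp (eq_one_of_forall_mem_openNormalSubgroup fun N => ?_)
    exact QuotientGroup.eq.mp ((hf N).1 a b)
  refine ⟨MonoidHom.mk' f hmul, ?_⟩
  rw [DenseRange, ← MonoidHom.coe_range]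
  refine Subgroup.dense_of_forall_map_mk'_eq_top fun N => ?_
  rw [MonoidHom.range_eq_map, ← hS, MonoidHom.map_closure, MonoidHom.map_closure, ← image_comp]
  exact (hf N).2

end Profinite

lemma exists_surjective_of_forall_finite_perfect {d : ℕ} {Γ : Type*} [Group Γ]
    (hΓ : ∀ (K : Type) (_ : Group K) (_ : Finite K), commutator K = ⊤ →
      (∃ g : Fin d → K, Subgroup.closure (range g) = ⊤) → ∃ f : Γ →* K, Surjective f)
    {Q : Type*} [Group Q] [Finite Q] (hQ : commutator Q = ⊤) (q : Fin d → Q)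
    (hq : Subgroup.closure (range q) = ⊤) : ∃ f : Γ →* Q, Surjective f := by
  let e : Shrink.{0} Q ≃* Q := Shrink.mulEquiv
  have : Group.IsPerfect Q := ⟨hQ⟩
  have hperf : Group.IsPerfect (Shrink.{0} Q) :=
    .ofSurjective (f := e.symm.toMonoidHom) e.symm.surjective
  obtain ⟨f, hf⟩ := hΓ (Shrink Q) _ inferInstance hperf.commutator_eq_top ⟨e.symm ∘ q, by
    rw [range_comp, ← MulEquiv.coe_toMonoidHom, ← MonoidHom.map_closure, hq,
      Subgroup.map_top_of_surjective _ e.symm.surjective]⟩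
  exact ⟨e.toMonoidHom.comp f, e.surjective.comp hf⟩

theorem dense_fg_perfect_subgroup_of_perfect_profinite_general
    (d : ℕ)
    (Γ : Type*) [Group Γ] (SΓ : Finset Γ)
    (hSΓ : Subgroup.closure (SΓ : Set Γ) = ⊤)
    (hΓperf : commutator Γ = ⊤)
    (hΓ : ∀ (K : Type) (_ : Group K) (_ : Finite K),
        commutator K = ⊤ →
        (∃ g : Fin d → K, Subgroup.closure (Set.range g) = ⊤) →
        ∃ f : Γ →* K, Function.Surjective f)
    (G : Type*) [Group G] [TopologicalSpace G] [IsTopologicalGroup G]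
    [CompactSpace G] [TotallyDisconnectedSpace G]
    (g : Fin d → G)
    (hg : Dense ((Subgroup.closure (Set.range g) : Subgroup G) : Set G))
    (hGperf : closure ((commutator G : Subgroup G) : Set G) = Set.univ) :
    ∃ H : Subgroup G, Dense (H : Set G) ∧ H.FG ∧ ⁅H, H⁆ = H := by
  have : Group.FG Γ := Group.fg_def.mpr ⟨SΓ, hSΓ⟩
  have : Group.IsPerfect Γ := ⟨hΓperf⟩
  have hquot (N : OpenNormalSubgroup G) : ∃ φ : Γ →* G ⧸ (N : Subgroup G), Surjective φ := by
    have hgN := Subgroup.map_mk'_eq_top_of_dense _ N.isOpen hg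
    rw [MonoidHom.map_closure, ← range_comp, QuotientGroup.coe_mk'] at hgN
    have := Subgroup.quotient_finite_of_isOpen _ N.isOpen
    exact exists_surjective_of_forall_finite_perfect hΓ
      (commutator_quotient_eq_top_of_dense (dense_iff_closure_eq.mpr hGperf) _ N.isOpen) _ hgN
  obtain ⟨F, hF⟩ := exists_monoidHom_denseRange_of_surjective_quotients hquot
  have : Group.IsPerfect F.range := .range F
  exact ⟨F.range, F.coe_range ▸ hF, (Group.fg_iff_subgroup_fg _).mp inferInstance,
    Subgroup.commutator_eq_self⟩

theorem dense_fg_perfect_subgroup_of_perfect_profinite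
    (d : ℕ) (hd : 2 ≤ d)
    (Γ : Type*) [Group Γ] (SΓ : Finset Γ)
    (hSΓ : Subgroup.closure (SΓ : Set Γ) = ⊤)
    (hΓperf : commutator Γ = ⊤)
    (hΓ : ∀ (K : Type) (_ : Group K) (_ : Finite K),
        commutator K = ⊤ →
        (∃ g : Fin d → K, Subgroup.closure (Set.range g) = ⊤) →
        ∃ f : Γ →* K, Function.Surjective f)
    (G : Type*) [Group G] [TopologicalSpace G] [IsTopologicalGroup G]
    [CompactSpace G] [T2Space G] [TotallyDisconnectedSpace G]
    (g : Fin d → G)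
    (hg : Dense ((Subgroup.closure (Set.range g) : Subgroup G) : Set G))
    (hGperf : closure ((commutator G : Subgroup G) : Set G) = Set.univ) :
    ∃ H : Subgroup G, Dense (H : Set G) ∧ H.FG ∧ ⁅H, H⁆ = H :=
  dense_fg_perfect_subgroup_of_perfect_profinite_general d Γ SΓ hSΓ hΓperf hΓ G g hg hGperf
end

section
/- Let G be a profinite group (a compact, Hausdorff, totally disconnected topological group) and let Γ be a finitely generated abstract group such that for every open normal subgroup N of G there exists a surjective group homomorphism from Γ onto the finite group G/N. Then there exists a group homomorphism φ: Γ → G whose image is dense in G. -/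
/-!
For each open normal subgroup `N` of `G`, the maps `f : Γ → G` whose reduction modulo `N` is a
surjective homomorphism onto the finite group `G ⧸ N` form a nonempty closed subset of the compact
space `Γ → G`; it is closed because, `Γ` being finitely generated, surjectivity of a homomorphism
only depends on the images of finitely many generators. These sets shrink as `N` does, so they
have a common point `f`. Since the open normal subgroups of a profinite group intersect trivially,
`f` is a homomorphism, and its image meets every coset of every open normal subgroup, hence is
dense.
-/

open Function QuotientGroup

section

variable {Γ : Type*} [Group Γ]

theorem isClosed_setOf_surjective_monoidHom (Q : Type*) [Group Q] [TopologicalSpace Q]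
    [DiscreteTopology Q] [Group.FG Γ] :
    IsClosed {v : Γ → Q | ∃ ψ : Γ →* Q, Surjective ψ ∧ ⇑ψ = v} := by
  obtain ⟨S, hS⟩ := Group.FG.out (G := Γ)
  have surjective_iff (ψ : Γ →* Q) :
      Surjective ψ ↔ Subgroup.closure (Set.range fun s : S ↦ ψ s) = ⊤ := by
    rw [← MonoidHom.range_eq_top, MonoidHom.range_eq_map, ← hS, MonoidHom.map_closure,
      Set.image_eq_range]
    exact Iff.rfl
  have : {v : Γ → Q | ∃ ψ : Γ →* Q, Surjective ψ ∧ ⇑ψ = v} =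
      Set.range ((⇑) : (Γ →* Q) → Γ → Q) ∩
        (fun v (s : S) ↦ v s) ⁻¹' {w | Subgroup.closure (Set.range w) = ⊤} := by
    ext v
    constructor
    · rintro ⟨ψ, hψ, rfl⟩
      exact ⟨⟨ψ, rfl⟩, (surjective_iff ψ).mp hψ⟩
    · rintro ⟨⟨ψ, rfl⟩, hψ⟩
      exact ⟨ψ, (surjective_iff ψ).mpr hψ, rfl⟩
  rw [this]
  exact (MonoidHom.isClosed_range_coe Γ Q).inter
    ((isClosed_discrete _).preimage (continuous_pi fun s ↦ continuous_apply _))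

variable {G : Type*} [Group G] [TopologicalSpace G] [IsTopologicalGroup G]

theorem exists_forall_surjective_monoidHom_eq_comp_mk [CompactSpace G] [Group.FG Γ]
    (h : ∀ N : OpenNormalSubgroup G, ∃ ψ : Γ →* G ⧸ (N : Subgroup G), Surjective ψ) :
    ∃ f : Γ → G, ∀ N : OpenNormalSubgroup G,
      ∃ ψ : Γ →* G ⧸ (N : Subgroup G), Surjective ψ ∧ ⇑ψ = (↑) ∘ f := by
  let C (N : OpenNormalSubgroup G) : Set (Γ → G) :=
    {f | ∃ ψ : Γ →* G ⧸ (N : Subgroup G), Surjective ψ ∧ ⇑ψ = (↑) ∘ f}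
  have isClosed_C (N : OpenNormalSubgroup G) : IsClosed (C N) :=
    haveI := QuotientGroup.discreteTopology N.isOpen'
    (isClosed_setOf_surjective_monoidHom _).preimage
      (f := fun f : Γ → G ↦ mk ∘ f)
      (continuous_pi fun γ ↦ continuous_mk.comp (continuous_apply γ))
  have nonempty_C (N : OpenNormalSubgroup G) : (C N).Nonempty := by
    obtain ⟨ψ, hψ⟩ := h N
    exact ⟨fun γ ↦ (ψ γ).out, ψ, hψ, funext fun γ ↦ (out_eq' (ψ γ)).symm⟩
  have monotone_C : Monotone C := by
    rintro N M hNM f ⟨ψ, hψ, hψf⟩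
    refine ⟨(map _ _ (MonoidHom.id G) hNM).comp ψ,
      (map_surjective_of_surjective _ _ _ mk_surjective hNM).comp hψ, ?_⟩
    rw [MonoidHom.coe_comp, hψf]
    rfl
  have : Nonempty (OpenNormalSubgroup G) :=
    ⟨{ toOpenSubgroup := ⊤, isNormal' := Subgroup.normal_top }⟩
  obtain ⟨f, hf⟩ := IsCompact.nonempty_iInter_of_directed_nonempty_isCompact_isClosed C
    monotone_C.directed_ge nonempty_C (fun N ↦ (isClosed_C N).isCompact) isClosed_C
  exact ⟨f, Set.mem_iInter.mp hf⟩

variable [CompactSpace G] [TotallyDisconnectedSpace G]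

theorem eq_of_forall_mk_eq {x y : G}
    (h : ∀ N : OpenNormalSubgroup G, (x : G ⧸ (N : Subgroup G)) = y) : x = y := by
  by_contra hxy
  obtain ⟨N, hN⟩ := ProfiniteGrp.exist_openNormalSubgroup_sub_open_nhds_of_one
    (isOpen_compl_singleton (x := x⁻¹ * y)) (by simpa [eq_comm, inv_mul_eq_one] using hxy)
  exact hN (QuotientGroup.eq.mp (h N)) rfl

theorem denseRange_of_forall_surjective_comp_mk {ι : Type*} (f : ι → G)
    (h : ∀ N : OpenNormalSubgroup G, Surjective ((↑) ∘ f : ι → G ⧸ (N : Subgroup G))) :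
    DenseRange f := by
  refine dense_iff_inter_open.mpr fun U hU ⟨g, hgU⟩ ↦ ?_
  obtain ⟨N, hN⟩ := ProfiniteGrp.exist_openNormalSubgroup_sub_open_nhds_of_one
    (hU.preimage (continuous_const_mul g)) (by simpa using hgU)
  obtain ⟨i, hi⟩ := h N g
  have : g * (g⁻¹ * f i) ∈ U := hN (QuotientGroup.eq.mp hi.symm)
  exact ⟨f i, by simpa using this, i, rfl⟩

end

theorem exists_hom_with_dense_image_of_surjections_onto_finite_quotients_general
    (G : Type*) [Group G] [TopologicalSpace G] [IsTopologicalGroup G]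
    [CompactSpace G] [TotallyDisconnectedSpace G]
    (Γ : Type*) [Group Γ] (S : Finset Γ)
    (hS : Subgroup.closure (S : Set Γ) = ⊤)
    (h : ∀ (N : Subgroup G) (_ : N.Normal), IsOpen (N : Set G) →
        ∃ f : Γ →* G ⧸ N, Function.Surjective f) :
    ∃ φ : Γ →* G, Dense (Set.range φ) := by
  have : Group.FG Γ := ⟨⟨S, hS⟩⟩
  obtain ⟨f, hf⟩ := exists_forall_surjective_monoidHom_eq_comp_mk (Γ := Γ) (G := G)
    fun N ↦ h N N.isNormal' N.isOpen'
  have hmul (a b : Γ) : f (a * b) = f a * f b := eq_of_forall_mk_eq fun N ↦ by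
    obtain ⟨ψ, -, hψf⟩ := hf N
    have hψ (γ : Γ) : ψ γ = f γ := congrFun hψf γ
    rw [QuotientGroup.mk_mul, ← hψ, ← hψ, ← hψ, map_mul]
  refine ⟨MonoidHom.mk' f hmul, denseRange_of_forall_surjective_comp_mk _ fun N ↦ ?_⟩
  obtain ⟨ψ, hψ, hψf⟩ := hf N
  exact hψf ▸ hψ

theorem exists_hom_with_dense_image_of_surjections_onto_finite_quotients
    (G : Type*) [Group G] [TopologicalSpace G] [IsTopologicalGroup G]
    [CompactSpace G] [T2Space G] [TotallyDisconnectedSpace G]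
    (Γ : Type*) [Group Γ] (S : Finset Γ)
    (hS : Subgroup.closure (S : Set Γ) = ⊤)
    (h : ∀ (N : Subgroup G) (_ : N.Normal), IsOpen (N : Set G) →
        ∃ f : Γ →* G ⧸ N, Function.Surjective f) :
    ∃ φ : Γ →* G, Dense (Set.range φ) :=
  exists_hom_with_dense_image_of_surjections_onto_finite_quotients_general G Γ S hS h
end
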